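/- In the maximal model of Proposition 8 (G_k as above, Q_k = G_k ⊗ 𝖰, Z_{kℓ} ∝ G_kG_ℓ ⊗ 𝖧), all the operators Z_{kℓ} for distinct unordered pairs {k,ℓ} are linearly independent, provided 𝖧 ≠ 0. -/

import Mathlib

/-!
All matrices involved are monomial in the bit-string basis of `ℂ^{2^{M-1}}`: the nonzero entries
of each one are exactly those in positions `(x, x + t)` for a fixed shift `t ∈ (ℤ/2)^{M-1}`.
The Pauli matrices `σ₁, σ₂` have shift `1` and `σ₃, I₂` have shift `0`, so shifts add under
tensor and matrix products. Each `Γ_j` is diagonal, so `G_k` flips the first `M - k` tensor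
factors, as `γ_k` does (none for `G_M`). Hence `G_k G_ℓ` (`k < ℓ`) flips exactly the factors in
positions `M - ℓ < p ≤ M - k`, and this interval determines the pair. Matrices with pairwise
distinct shifts are linearly independent, and so are their tensor products with `𝖧 ≠ 0`.
-/

open Matrix
open scoped TensorProduct

/-- The Pauli matrix σ₁. -/
noncomputable def pauli1 : Matrix (Fin 2) (Fin 2) ℂ := !![0, 1; 1, 0]
/-- The Pauli matrix σ₂. -/
noncomputable def pauli2 : Matrix (Fin 2) (Fin 2) ℂ := !![0, -Complex.I; Complex.I, 0]
/-- The Pauli matrix σ₃. -/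
noncomputable def pauli3 : Matrix (Fin 2) (Fin 2) ℂ := !![1, 0; 0, -1]

/-- The n-fold tensor (Kronecker) product of 2×2 matrices, realized as a matrix on
    the index set Fin n → Fin 2: entry (x,y) is the product of the factor entries. -/
noncomputable def tensorFun {n : ℕ} (fac : Fin n → Matrix (Fin 2) (Fin 2) ℂ) :
    Matrix (Fin n → Fin 2) (Fin n → Fin 2) ℂ :=
  Matrix.of fun x y => ∏ p, fac p (x p) (y p)

/-- γ_j (1-based j): γ_1 = σ₁^{⊗n}, γ_j = σ₁^{⊗(n-j+1)} ⊗ σ₃ ⊗ I₂^{⊗(j-2)} for 2 ≤ j ≤ n.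
    The factor at (1-based) tensor position p is σ₁ if p ≤ n-j+1, σ₃ if p = n-j+2, I₂ else. -/
noncomputable def gammaMat (n j : ℕ) : Matrix (Fin n → Fin 2) (Fin n → Fin 2) ℂ :=
  tensorFun fun p =>
    if p.val + 1 ≤ n - j + 1 then pauli1 else if p.val + 1 = n - j + 2 then pauli3 else 1

/-- γ̃_j (1-based j): γ̃_j = σ₁^{⊗(n-j)} ⊗ σ₂ ⊗ I₂^{⊗(j-1)} for 1 ≤ j ≤ n. -/
noncomputable def gtildeMat (n j : ℕ) : Matrix (Fin n → Fin 2) (Fin n → Fin 2) ℂ :=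
  tensorFun fun p =>
    if p.val + 1 ≤ n - j then pauli1 else if p.val + 1 = n - j + 1 then pauli2 else 1

/-- The 2n generators γ_1,…,γ_n, γ̃_1,…,γ̃_n of Cl(2n). -/
noncomputable def cliffGen (n : ℕ) (i : Fin (2 * n)) :
    Matrix (Fin n → Fin 2) (Fin n → Fin 2) ℂ :=
  if i.val < n then gammaMat n (i.val + 1) else gtildeMat n (i.val - n + 1)

/-- Γ_j := i γ_j γ̃_j, ℕ-guarded, in the standard tensor-product representation of
    Cl(2(M−1)) on ℂ^{2^{M−1}}. -/
noncomputable def GammaOf (M : ℕ) (j : ℕ) :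
    Matrix (Fin (M - 1) → Fin 2) (Fin (M - 1) → Fin 2) ℂ :=
  if j < M - 1 then
    Complex.I • (gammaMat (M - 1) (j + 1) * gtildeMat (M - 1) (j + 1))
  else 1

/-- The dot product a_k · a_ℓ ∈ {0,1} (as a natural number), ℕ-guarded in k, ℓ. -/
def dotOf {n M : ℕ} (a : Fin M → Fin n → ZMod 2) (k ℓ : ℕ) : ℕ :=
  if h : k < M ∧ ℓ < M then (∑ j, a ⟨k, h.1⟩ j * a ⟨ℓ, h.2⟩ j).val else 0

/-- G_1 = γ_1, G_m = (∏_{j<m} Γ_j^{a_j·a_m}) γ_m for 2 ≤ m ≤ M−1, and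
    G_M = ∏_{j<M−1} Γ_j^{1−a_j·a_M}, realized in the standard representation
    of Cl(2(M−1)) = Cl(2^n − 2). -/
noncomputable def GmaxMat {n : ℕ} (M : ℕ) (a : Fin M → Fin n → ZMod 2) (k : Fin M) :
    Matrix (Fin (M - 1) → Fin 2) (Fin (M - 1) → Fin 2) ℂ :=
  if k.val + 1 = M then
    ((List.range (M - 1)).map fun j => GammaOf M j ^ (1 - dotOf a j k.val)).prod
  else
    ((List.range k.val).map fun j => GammaOf M j ^ dotOf a j k.val).prod *
      gammaMat (M - 1) (k.val + 1)

def HasShiftSupport {G R : Type*} [Add G] [Zero R] (t : G) (A : Matrix G G R) : Prop :=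
  ∀ x y, A x y ≠ 0 ↔ y = x + t

namespace HasShiftSupport

variable {G R : Type*}

theorem one [AddZeroClass G] [DecidableEq G] [MulZeroOneClass R] [Nontrivial R] :
    HasShiftSupport (0 : G) (1 : Matrix G G R) := by
  intro x y
  by_cases h : x = y <;> simp [one_apply, h, eq_comm]

theorem mul [Fintype G] [AddSemigroup G] [NonUnitalNonAssocSemiring R] [NoZeroDivisors R]
    {s t : G} {A B : Matrix G G R} (hA : HasShiftSupport s A) (hB : HasShiftSupport t B) :
    HasShiftSupport (s + t) (A * B) := by
  intro x y
  have hoff : ∀ z, z ≠ x + s → A x z * B z y = 0 := fun z hz => by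
    rw [not_imp_comm.mp (hA x z).mp hz, zero_mul]
  rw [mul_apply, Finset.sum_eq_single_of_mem (x + s) (Finset.mem_univ _) fun z _ => hoff z,
    mul_ne_zero_iff, ← add_assoc]
  exact ⟨fun h => (hB _ _).mp h.2, fun h => ⟨(hA _ _).mpr rfl, (hB _ _).mpr h⟩⟩

theorem smul [Add G] [MulZeroClass R] [NoZeroDivisors R] {t : G} {A : Matrix G G R} {c : R}
    (hc : c ≠ 0) (hA : HasShiftSupport t A) : HasShiftSupport t (c • A) := by
  intro x y
  rw [Matrix.smul_apply, smul_eq_mul, mul_ne_zero_iff, ← hA]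
  exact and_iff_right hc

variable [Fintype G] [DecidableEq G] [Semiring R] [NoZeroDivisors R] [Nontrivial R]

theorem pow [AddMonoid G] {t : G} {A : Matrix G G R} (hA : HasShiftSupport t A) (e : ℕ) :
    HasShiftSupport (e • t) (A ^ e) := by
  induction e with
  | zero => simpa using one
  | succ e ih => simpa [pow_succ, succ_nsmul] using ih.mul hA

theorem list_prod [AddMonoid G] {l : List (Matrix G G R)}
    (h : ∀ A ∈ l, HasShiftSupport (0 : G) A) : HasShiftSupport (0 : G) l.prod := by
  induction l with
  | nil => exact one
  | cons A l ih =>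
    simpa using (h A List.mem_cons_self).mul (ih fun B hB => h B (List.mem_cons_of_mem A hB))

end HasShiftSupport

theorem linearIndependent_of_hasShiftSupport {ι G K : Type*} [AddZeroClass G] [Field K]
    {A : ι → Matrix G G K} {t : ι → G} (hA : ∀ i, HasShiftSupport (t i) (A i))
    (ht : Function.Injective t) : LinearIndependent K A := by
  have hdiag : ∀ i, A i 0 (t i) ≠ 0 := fun i => (hA i 0 (t i)).mpr (zero_add _).symm
  refine .of_pairwise_dual_eq_zero_one A
    (fun i => (A i 0 (t i))⁻¹ • entryLinearMap K K 0 (t i)) (fun i j hij => ?_)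
    (fun i => inv_mul_cancel₀ (hdiag i))
  have hoff : A j 0 (t i) = 0 := by
    by_contra h
    exact hij (ht (((hA j 0 (t i)).mp h).trans (zero_add _)))
  simp [hoff]

theorem hasShiftSupport_tensorFun {d : ℕ} {t : Fin d → Fin 2}
    {F : Fin d → Matrix (Fin 2) (Fin 2) ℂ} (hF : ∀ p, HasShiftSupport (t p) (F p)) :
    HasShiftSupport t (tensorFun F) := by
  intro x y
  simp only [tensorFun, of_apply, Ne, Finset.prod_eq_zero_iff, Finset.mem_univ, true_and,
    not_exists, funext_iff, Pi.add_apply]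
  exact forall_congr' fun p => hF p _ _

theorem hasShiftSupport_pauli1 : HasShiftSupport 1 pauli1 := by
  intro x y; fin_cases x <;> fin_cases y <;> simp [pauli1]

theorem hasShiftSupport_pauli2 : HasShiftSupport 1 pauli2 := by
  intro x y; fin_cases x <;> fin_cases y <;> simp [pauli2]

theorem hasShiftSupport_pauli3 : HasShiftSupport 0 pauli3 := by
  intro x y; fin_cases x <;> fin_cases y <;> simp [pauli3]

def gammaShift (m j : ℕ) : Fin m → Fin 2 := fun p => if p.val + 1 ≤ m - j + 1 then 1 else 0

theorem hasShiftSupport_gammaMat (m j : ℕ) : HasShiftSupport (gammaShift m j) (gammaMat m j) := by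
  refine hasShiftSupport_tensorFun fun p => ?_
  unfold gammaShift
  split_ifs <;> first
    | exact hasShiftSupport_pauli1 | exact hasShiftSupport_pauli3 | exact HasShiftSupport.one

theorem hasShiftSupport_gtildeMat (m j : ℕ) :
    HasShiftSupport (gammaShift m j) (gtildeMat m j) := by
  refine hasShiftSupport_tensorFun fun p => ?_
  unfold gammaShift
  split_ifs <;> first
    | exact hasShiftSupport_pauli1 | exact hasShiftSupport_pauli2
    | exact HasShiftSupport.one | omega

theorem hasShiftSupport_GammaOf (M j : ℕ) : HasShiftSupport 0 (GammaOf M j) := by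
  unfold GammaOf
  split_ifs
  · have hcancel : gammaShift (M - 1) (j + 1) + gammaShift (M - 1) (j + 1) = 0 :=
      funext fun p => (by decide : ∀ b : Fin 2, b + b = 0) _
    simpa [hcancel] using ((hasShiftSupport_gammaMat (M - 1) (j + 1)).mul
      (hasShiftSupport_gtildeMat (M - 1) (j + 1))).smul Complex.I_ne_zero
  · exact HasShiftSupport.one

def gmaxShift (M k : ℕ) : Fin (M - 1) → Fin 2 := fun p => if p.val + k + 1 < M then 1 else 0

theorem hasShiftSupport_GmaxMat {n M : ℕ} (a : Fin M → Fin n → ZMod 2) (k : Fin M) :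
    HasShiftSupport (gmaxShift M k) (GmaxMat M a k) := by
  have hΓ : ∀ (l : List ℕ) (e : ℕ → ℕ),
      HasShiftSupport 0 ((l.map fun j => GammaOf M j ^ e j).prod) := fun l e =>
    HasShiftSupport.list_prod <| by
      simpa using fun j _ => by simpa using (hasShiftSupport_GammaOf M j).pow (e j)
  have hk := k.isLt
  unfold GmaxMat
  split_ifs with hlast
  · rw [show gmaxShift M k = 0 from funext fun p => if_neg (by omega)]
    exact hΓ _ _
  · rw [show gmaxShift M k = 0 + gammaShift (M - 1) (k + 1) from
      funext fun p => by
        simp only [gmaxShift, gammaShift, Pi.add_apply, Pi.zero_apply, zero_add]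
        exact if_congr (by omega) rfl rfl]
    exact (hΓ _ _).mul (hasShiftSupport_gammaMat _ _)

theorem gmaxShift_add_injective (M : ℕ) :
    Function.Injective fun p : {p : Fin M × Fin M // p.1 < p.2} =>
      gmaxShift M p.1.1 + gmaxShift M p.1.2 := by
  rintro ⟨⟨k, l⟩, hkl⟩ ⟨⟨k', l'⟩, hkl'⟩ h
  simp only [Fin.lt_def] at hkl hkl'
  -- both sides are indicators of intervals `[M - 1 - l, M - 1 - k)`; compare at the endpoints
  have hmem : ∀ p : Fin (M - 1),
      (p.val + k + 1 < M ∧ M ≤ p.val + l + 1) ↔ (p.val + k' + 1 < M ∧ M ≤ p.val + l' + 1) := by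
    intro p
    have hp := congrFun h p
    simp only [Pi.add_apply, gmaxShift] at hp
    split_ifs at hp <;> omega
  have e1 := hmem ⟨M - 2 - k, by omega⟩
  have e2 := hmem ⟨M - 2 - k', by omega⟩
  have e3 := hmem ⟨M - 2 - l, by omega⟩
  have e4 := hmem ⟨M - 2 - l', by omega⟩
  simp only at e1 e2 e3 e4
  have hk : k = k' := Fin.ext (by omega)
  have hl : l = l' := Fin.ext (by omega)
  subst hk hl
  rfl

theorem Zmax_linearIndependent_general {B : Type*} [Ring B] [Algebra ℂ B]
    (n : ℕ) (M : ℕ)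
    (a : Fin M → Fin n → ZMod 2)
    (sH : B) (hsH : sH ≠ 0) :
    LinearIndependent ℂ (fun p : {p : Fin M × Fin M // p.1 < p.2} =>
      (((-Complex.I) ^ (1 - dotOf a p.1.1.val p.1.2.val)) •
        ((GmaxMat M a p.1.1 * GmaxMat M a p.1.2) ⊗ₜ[ℂ] sH) :
        Matrix (Fin (M - 1) → Fin 2) (Fin (M - 1) → Fin 2) ℂ ⊗[ℂ] B)) := by
  have hZ : LinearIndependent ℂ fun p : {p : Fin M × Fin M // p.1 < p.2} =>
      (-Complex.I) ^ (1 - dotOf a p.1.1.val p.1.2.val) • (GmaxMat M a p.1.1 * GmaxMat M a p.1.2) :=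
    linearIndependent_of_hasShiftSupport
      (fun p => ((hasShiftSupport_GmaxMat a _).mul (hasShiftSupport_GmaxMat a _)).smul
        (pow_ne_zero _ (neg_ne_zero.mpr Complex.I_ne_zero)))
      (gmaxShift_add_injective M)
  have hH : LinearIndependent ℂ fun _ : Unit => sH := .of_subsingleton () hsH
  simp only [TensorProduct.smul_tmul']
  exact (hZ.tmul_of_isDomain hH).comp (fun p => (p, ())) fun _ _ h => congrArg Prod.fst h

/-- in the maximal model, the central elements
    Z_{kℓ} = (−i)^{1−a_k·a_ℓ} G_kG_ℓ ⊗ 𝖧 for distinct unordered pairs {k,ℓ}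
    (represented by k < ℓ) are linearly independent, provided 𝖧 ≠ 0. -/
theorem Zmax_linearIndependent {B : Type*} [Ring B] [Algebra ℂ B]
    (n : ℕ) (hn : 2 ≤ n) (M : ℕ) (hM : M = 2 ^ (n - 1))
    (a : Fin M → Fin n → ZMod 2)
    (hpar : ∀ k, (∑ j, a k j) = 1) (hinj : Function.Injective a)
    (sH : B) (hsH : sH ≠ 0) :
    LinearIndependent ℂ (fun p : {p : Fin M × Fin M // p.1 < p.2} =>
      (((-Complex.I) ^ (1 - dotOf a p.1.1.val p.1.2.val)) •
        ((GmaxMat M a p.1.1 * GmaxMat M a p.1.2) ⊗ₜ[ℂ] sH) :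
        Matrix (Fin (M - 1) → Fin 2) (Fin (M - 1) → Fin 2) ℂ ⊗[ℂ] B)) :=
  Zmax_linearIndependent_general n M a sH hsH
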